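/- arXiv:cond-mat/9910325 — 3 statements merged into one kernel-verified Lean document; each statement's English description precedes it below -/
import Mathlib

section
/- Let θ₂ ∈ ℝ and let u ∈ 𝒮'(ℝ) satisfy T_P u = exp(iθ₂) u, i.e. the product of u with the function x ↦ exp(2πiNx) equals exp(iθ₂) u. Then u is supported on the lattice S = {(n + θ₂/(2π))/N : n ∈ ℤ}, in the sense that u(φ) = 0 for every Schwartz function φ whose (closed) support is disjoint from S. -/
open MeasureTheory Complex SchwartzMap
open scoped ContDiff

noncomputable section

namespace Stmt4Aux

lemma natle (n : ℕ) : (n : WithTop ℕ∞) ≤ ∞ := by exact_mod_cast le_top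

/-- A fixed bump function on `ℝ`: equal to 1 on `[-1,1]`, supported in `(-2,2)`. -/
def b : ContDiffBump (0 : ℝ) := ⟨1, 2, one_pos, one_lt_two⟩

/-- A smooth compactly supported function is a Schwartz function. -/
def ofCS (f : ℝ → ℂ) (hsm : ContDiff ℝ ∞ f) (hsupp : HasCompactSupport f) : 𝓢(ℝ, ℂ) where
  toFun := f
  smooth' := hsm
  decay' := by
    intro k n
    have hFc : Continuous fun x : ℝ => ‖x‖ ^ k * ‖iteratedFDeriv ℝ n f x‖ :=
      ((continuous_norm).pow k).mul
        ((hsm.continuous_iteratedFDeriv (m := n) (natle n)).norm)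
    have hFs : HasCompactSupport fun x : ℝ => ‖x‖ ^ k * ‖iteratedFDeriv ℝ n f x‖ :=
      HasCompactSupport.mul_left ((hsupp.iteratedFDeriv n).norm)
    obtain ⟨x₀, hx₀⟩ := hFc.exists_forall_ge_of_hasCompactSupport hFs
    exact ⟨_, hx₀⟩

@[simp] lemma ofCS_apply (f : ℝ → ℂ) (hsm : ContDiff ℝ ∞ f) (hsupp : HasCompactSupport f)
    (x : ℝ) : ofCS f hsm hsupp x = f x := rfl

lemma mem_lattice {N : ℕ} (hN : 1 ≤ N) {θ₂ : ℝ} {x : ℝ}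
    (h : Complex.exp (2 * Real.pi * Complex.I * N * x) = Complex.exp (Complex.I * θ₂)) :
    ∃ n : ℤ, x = ((n : ℝ) + θ₂ / (2 * Real.pi)) / N := by
  rw [Complex.exp_eq_exp_iff_exists_int] at h
  obtain ⟨n, hn⟩ := h
  refine ⟨n, ?_⟩
  have hπ : (Real.pi : ℝ) ≠ 0 := Real.pi_ne_zero
  have hNne : (N : ℝ) ≠ 0 := Nat.cast_ne_zero.mpr (by omega)
  have hn' : (Complex.I) * ((2 * Real.pi * N * x : ℝ) : ℂ)
      = Complex.I * ((θ₂ + n * (2 * Real.pi) : ℝ) : ℂ) := by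
    push_cast
    linear_combination hn
  have hr : 2 * Real.pi * N * x = θ₂ + n * (2 * Real.pi) := by
    exact_mod_cast mul_left_cancel₀ Complex.I_ne_zero hn'
  field_simp
  linear_combination hr

lemma chi_smooth {r : ℝ} : ContDiff ℝ ∞ fun y : ℝ => b (r⁻¹ * y) :=
  b.contDiff.comp (contDiff_const.mul contDiff_id)

lemma chi_supp {r : ℝ} (hr : 0 < r) : HasCompactSupport fun y : ℝ => b (r⁻¹ * y) := by
  apply HasCompactSupport.intro (isCompact_closedBall (0 : ℝ) (2 * r))
  intro x hx
  have hx' : 2 * r < |x| := by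
    simpa [Metric.mem_closedBall, Real.dist_eq, not_le] using hx
  have : r⁻¹ * x ∉ Function.support ⇑b := by
    rw [b.support_eq]
    simp only [Metric.mem_ball, Real.dist_eq, sub_zero, not_lt]
    show (2:ℝ) ≤ |r⁻¹ * x|
    rw [abs_mul, abs_inv, abs_of_pos hr, inv_mul_eq_div, le_div_iff₀ hr]
    linarith
  simpa using this

lemma bump_fderiv_bound (i : ℕ) : ∃ M : ℝ, ∀ y : ℝ, ‖iteratedFDeriv ℝ i (⇑b) y‖ ≤ M := by
  have hc : Continuous fun y : ℝ => ‖iteratedFDeriv ℝ i (⇑b) y‖ :=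
    (b.contDiff.continuous_iteratedFDeriv (m := i) (natle i)).norm
  have hs : HasCompactSupport fun y : ℝ => ‖iteratedFDeriv ℝ i (⇑b) y‖ :=
    (b.hasCompactSupport.iteratedFDeriv i).norm
  obtain ⟨x₀, hx₀⟩ := hc.exists_forall_ge_of_hasCompactSupport hs
  exact ⟨_, hx₀⟩

lemma cutoff_deriv_bound : ∃ E : ℕ → ℝ, (∀ i, 0 ≤ E i) ∧
    ∀ (i : ℕ) (r : ℝ), 1 ≤ r → ∀ x : ℝ,
      ‖iteratedFDeriv ℝ i (fun y : ℝ => 1 - b (r⁻¹ * y)) x‖ ≤ E i := by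
  choose M hM using bump_fderiv_bound
  refine ⟨fun i => max 1 (max (M i) 0), fun i => le_max_of_le_left zero_le_one, ?_⟩
  intro i r hr x
  have hr0 : 0 < r := lt_of_lt_of_le one_pos hr
  match i with
  | 0 =>
    simp only [norm_iteratedFDeriv_zero]
    have h1 := b.nonneg (x := r⁻¹ * x)
    have h2 := b.le_one (x := r⁻¹ * x)
    refine le_max_of_le_left ?_
    rw [Real.norm_eq_abs, abs_le]
    constructor <;> linarith
  | (j+1) =>
    have hχ : ContDiff ℝ (j+1 : ℕ) fun y : ℝ => b (r⁻¹ * y) :=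
      chi_smooth.of_le (natle (j+1))
    have h1 : (fun y : ℝ => 1 - b (r⁻¹ * y))
        = (fun _ : ℝ => (1:ℝ)) + (-(fun y : ℝ => b (r⁻¹ * y))) := by
      funext y; simp [sub_eq_add_neg]
    have hgc : ContDiff ℝ (j+1 : ℕ) (-(fun y : ℝ => b (r⁻¹ * y))) := hχ.neg
    rw [h1, iteratedFDeriv_add_apply contDiff_const.contDiffAt hgc.contDiffAt,
      iteratedFDeriv_const_of_ne (Nat.succ_ne_zero j)]
    simp only [Pi.zero_apply, zero_add]
    have h2 : (-(fun y : ℝ => b (r⁻¹ * y))) = fun y : ℝ => -(b (r⁻¹ * y)) := rfl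
    rw [h2]
    have h3 : iteratedFDeriv ℝ (j+1) (fun y : ℝ => -(b (r⁻¹ * y))) x
        = -iteratedFDeriv ℝ (j+1) (fun y : ℝ => b (r⁻¹ * y)) x := by
      exact iteratedFDeriv_neg_apply
    rw [h3, norm_neg, norm_iteratedFDeriv_eq_norm_iteratedDeriv]
    have hb : ContDiff ℝ (j+1 : ℕ) ⇑b := b.contDiff.of_le (natle (j+1))
    have h4 : iteratedDeriv (j+1) (fun y : ℝ => b (r⁻¹ * y)) x
        = (r⁻¹) ^ (j+1) * iteratedDeriv (j+1) (⇑b) (r⁻¹ * x) := by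
      rw [iteratedDeriv_comp_const_mul hb]
    rw [h4]
    have h5 : ‖iteratedDeriv (j+1) (⇑b) (r⁻¹ * x)‖ ≤ max (M (j+1)) 0 := by
      rw [← norm_iteratedFDeriv_eq_norm_iteratedDeriv]
      exact le_max_of_le_left (hM (j+1) _)
    have h6 : |r⁻¹ ^ (j+1)| ≤ 1 := by
      rw [_root_.abs_pow]
      apply pow_le_one₀ (abs_nonneg _)
      rw [abs_inv, abs_of_pos hr0]
      exact inv_le_one_of_one_le₀ hr
    calc ‖r⁻¹ ^ (j+1) * iteratedDeriv (j+1) (⇑b) (r⁻¹ * x)‖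
        = |r⁻¹ ^ (j+1)| * ‖iteratedDeriv (j+1) (⇑b) (r⁻¹ * x)‖ := by
          rw [norm_mul, Real.norm_eq_abs]
      _ ≤ 1 * max (M (j+1)) 0 := by
          apply mul_le_mul h6 h5 (norm_nonneg _) zero_le_one
      _ ≤ max 1 (max (M (j+1)) 0) := by rw [one_mul]; exact le_max_right _ _

lemma seminorm_bound (φ : 𝓢(ℝ, ℂ)) (k n : ℕ) :
    ∃ C : ℝ, 0 ≤ C ∧ ∀ (r : ℝ), 1 ≤ r → ∀ x : ℝ,
      ‖x‖ ^ k * ‖iteratedFDeriv ℝ n (fun y : ℝ => (1 - b (r⁻¹ * y)) • φ y) x‖ ≤ C / r := by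
  obtain ⟨E, hE0, hE⟩ := cutoff_deriv_bound
  set S : ℕ → ℝ := fun i => SchwartzMap.seminorm ℝ (k+1) (n - i) φ with hS
  have hC0 : 0 ≤ ∑ i ∈ Finset.range (n+1), (n.choose i : ℝ) * E i * S i := by
    apply Finset.sum_nonneg
    intro i _
    exact mul_nonneg (mul_nonneg (Nat.cast_nonneg _) (hE0 i)) (apply_nonneg _ _)
  refine ⟨∑ i ∈ Finset.range (n+1), (n.choose i : ℝ) * E i * S i, hC0, ?_⟩
  intro r hr x
  have hr0 : 0 < r := lt_of_lt_of_le one_pos hr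
  by_cases hx : ‖x‖ < r
  · -- the function vanishes in a neighborhood of x
    have hzero : (fun y : ℝ => (1 - b (r⁻¹ * y)) • φ y) =ᶠ[nhds x] (fun _ => (0:ℂ)) := by
      have hopen : IsOpen (Metric.ball (0:ℝ) r) := Metric.isOpen_ball
      have hxmem : x ∈ Metric.ball (0:ℝ) r := by
        simpa [Metric.mem_ball, Real.dist_eq] using hx
      filter_upwards [hopen.mem_nhds hxmem] with y hy
      have hy' : |y| < r := by simpa [Metric.mem_ball, Real.dist_eq] using hy
      have hb1 : b (r⁻¹ * y) = 1 := by
        apply b.one_of_mem_closedBall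
        simp only [Metric.mem_closedBall, Real.dist_eq, sub_zero]
        show |r⁻¹ * y| ≤ (1:ℝ)
        rw [abs_mul, abs_inv, abs_of_pos hr0, inv_mul_eq_div, div_le_one hr0]
        exact le_of_lt hy'
      simp [hb1]
    have heq : iteratedFDeriv ℝ n (fun y : ℝ => (1 - b (r⁻¹ * y)) • φ y) x
        = iteratedFDeriv ℝ n (fun _ : ℝ => (0:ℂ)) x := by
      simp_rw [← iteratedFDerivWithin_univ]
      apply Filter.EventuallyEq.iteratedFDerivWithin_eq ?_ ?_ n
      · rw [nhdsWithin_univ]; exact hzero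
      · exact hzero.eq_of_nhds
    rw [heq, iteratedFDeriv_zero_fun]
    simp only [Pi.zero_apply, norm_zero, mul_zero]
    exact div_nonneg hC0 hr0.le
  · push_neg at hx
    have h0x : 0 < ‖x‖ := lt_of_lt_of_le hr0 hx
    have hleib := norm_iteratedFDeriv_smul_le (𝕜 := ℝ) (𝕜' := ℝ) (F := ℂ)
      (f := fun y : ℝ => 1 - b (r⁻¹ * y)) (g := fun y => φ y)
      ((contDiff_const.sub chi_smooth)) (φ.smooth') x (natle n)
    calc ‖x‖ ^ k * ‖iteratedFDeriv ℝ n (fun y : ℝ => (1 - b (r⁻¹ * y)) • φ y) x‖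
        ≤ ‖x‖ ^ k * ∑ i ∈ Finset.range (n+1),
            (n.choose i : ℝ) * ‖iteratedFDeriv ℝ i (fun y : ℝ => 1 - b (r⁻¹ * y)) x‖ *
              ‖iteratedFDeriv ℝ (n - i) (fun y => φ y) x‖ := by
          apply mul_le_mul_of_nonneg_left hleib (by positivity)
      _ = ∑ i ∈ Finset.range (n+1),
            (n.choose i : ℝ) * ‖iteratedFDeriv ℝ i (fun y : ℝ => 1 - b (r⁻¹ * y)) x‖ *
              (‖x‖ ^ k * ‖iteratedFDeriv ℝ (n - i) (fun y => φ y) x‖) := by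
          rw [Finset.mul_sum]; apply Finset.sum_congr rfl; intro i _; ring
      _ ≤ ∑ i ∈ Finset.range (n+1), (n.choose i : ℝ) * E i * (S i / r) := by
          apply Finset.sum_le_sum
          intro i _
          have h1 : ‖x‖ ^ k * ‖iteratedFDeriv ℝ (n - i) (fun y => φ y) x‖ ≤ S i / r := by
            rw [le_div_iff₀ hr0]
            calc ‖x‖ ^ k * ‖iteratedFDeriv ℝ (n - i) (fun y => φ y) x‖ * r
                ≤ ‖x‖ ^ k * ‖iteratedFDeriv ℝ (n - i) (fun y => φ y) x‖ * ‖x‖ := by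
                  apply mul_le_mul_of_nonneg_left hx (by positivity)
              _ = ‖x‖ ^ (k+1) * ‖iteratedFDeriv ℝ (n - i) (fun y => φ y) x‖ := by ring
              _ ≤ S i := SchwartzMap.le_seminorm ℝ (k+1) (n - i) φ x
          have h2 : (n.choose i : ℝ) * ‖iteratedFDeriv ℝ i (fun y : ℝ => 1 - b (r⁻¹ * y)) x‖
              ≤ (n.choose i : ℝ) * E i := by
            apply mul_le_mul_of_nonneg_left (hE i r hr x) (by positivity)
          apply mul_le_mul h2 h1 (by positivity)
            (mul_nonneg (Nat.cast_nonneg _) (hE0 i))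
      _ = (∑ i ∈ Finset.range (n+1), (n.choose i : ℝ) * E i * S i) / r := by
          rw [Finset.sum_div]
          apply Finset.sum_congr rfl; intro i _; ring

lemma tendsto_cutoff (φ : 𝓢(ℝ, ℂ)) (Φ : ℕ → 𝓢(ℝ, ℂ))
    (hΦ : ∀ (m : ℕ) (x : ℝ), Φ m x = (b ((((m:ℝ)+1))⁻¹ * x) : ℝ) • φ x) :
    Filter.Tendsto Φ Filter.atTop (nhds φ) := by
  rw [(schwartz_withSeminorms ℝ ℝ ℂ).tendsto_nhds Φ φ]
  rintro ⟨k, n⟩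
  obtain ⟨C, hC0, hC⟩ := seminorm_bound φ k n
  have key : ∀ m : ℕ, schwartzSeminormFamily ℝ ℝ ℂ (k, n) (Φ m - φ) ≤ C / ((m:ℝ)+1) := by
    intro m
    have hm0 : (0:ℝ) ≤ (m:ℝ) := Nat.cast_nonneg m
    have hr : (1:ℝ) ≤ (m:ℝ)+1 := by linarith
    rw [schwartzSeminormFamily_apply]
    apply SchwartzMap.seminorm_le_bound ℝ k n _ (div_nonneg hC0 (by linarith))
    intro x
    have hfun : (⇑(Φ m - φ)) = fun y => -((1 - b ((((m:ℝ)+1))⁻¹ * y)) • φ y) := by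
      funext y
      simp only [SchwartzMap.sub_apply, hΦ m y, sub_smul, one_smul, neg_sub]
    rw [hfun]
    have hneg : iteratedFDeriv ℝ n (fun y => -((1 - b ((((m:ℝ)+1))⁻¹ * y)) • φ y)) x
        = -iteratedFDeriv ℝ n (fun y => (1 - b ((((m:ℝ)+1))⁻¹ * y)) • φ y) x :=
      iteratedFDeriv_neg_apply
    rw [hneg, norm_neg]
    exact hC ((m:ℝ)+1) hr x
  have h0 : ∀ m : ℕ, 0 ≤ schwartzSeminormFamily ℝ ℝ ℂ (k, n) (Φ m - φ) :=
    fun m => apply_nonneg _ _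
  have hlim : Filter.Tendsto (fun m : ℕ => C / ((m:ℝ)+1)) Filter.atTop (nhds 0) := by
    have h1 := tendsto_const_div_atTop_nhds_zero_nat C
    have h2 := h1.comp (Filter.tendsto_add_atTop_nat 1)
    have heq : (fun m : ℕ => C / ((m:ℝ)+1)) = (fun n : ℕ => C / (n:ℝ)) ∘ fun a => a + 1 := by
      funext m
      simp only [Function.comp_apply]
      norm_cast
    rw [heq]
    exact h2
  have hsq := squeeze_zero h0 key hlim
  intro ε hε
  exact hsq.eventually_lt_const hε

end Stmt4Aux

open Stmt4Aux in
/-- If a tempered distribution `u` satisfies `T_P u = exp(iθ₂) u`, i.e. the product of `u`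
with `x ↦ exp(2πiNx)` equals `exp(iθ₂) u`, then `u` is supported on the lattice
`S = {(n + θ₂/(2π))/N : n ∈ ℤ}`: it vanishes on every Schwartz function whose closed
support is disjoint from `S`. -/
theorem stmt_4 (N : ℕ) (hN : 1 ≤ N) (θ₂ : ℝ) (u : SchwartzMap ℝ ℂ →L[ℂ] ℂ)
    (hu : ∀ φ ψ : SchwartzMap ℝ ℂ,
      (∀ x : ℝ, ψ x = Complex.exp (2 * Real.pi * Complex.I * N * x) * φ x) →
      u ψ = Complex.exp (Complex.I * θ₂) * u φ)
    (φ : SchwartzMap ℝ ℂ)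
    (hφ : Disjoint (tsupport (φ : ℝ → ℂ))
      {x : ℝ | ∃ n : ℤ, x = ((n : ℝ) + θ₂ / (2 * Real.pi)) / N}) :
    u φ = 0 := by
  set e₂ : ℂ := Complex.exp (Complex.I * θ₂) with he₂
  have hexp_sm : ContDiff ℝ ∞ (fun x : ℝ => Complex.exp (2 * Real.pi * Complex.I * N * x)) := by
    have h := (Complex.contDiff_exp (𝕜 := ℂ) (n := ∞)).restrict_scalars ℝ
    have heq : (fun x : ℝ => Complex.exp (2 * Real.pi * Complex.I * N * x))
        = Complex.exp ∘ fun x : ℝ => ((2 * Real.pi * Complex.I * N : ℂ)) * x := by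
      funext x; simp [Function.comp]
    rw [heq]
    exact h.comp (contDiff_const.mul Complex.ofRealCLM.contDiff)
  set g : ℝ → ℂ := fun x => Complex.exp (2 * Real.pi * Complex.I * N * x) - e₂ with hgdef
  have hg_sm : ContDiff ℝ ∞ g := hexp_sm.sub contDiff_const
  have hnotin : ∀ x : ℝ, g x = 0 → x ∉ tsupport (φ : ℝ → ℂ) := by
    intro x hx hmem
    have hx' : Complex.exp (2 * Real.pi * Complex.I * N * x) = Complex.exp (Complex.I * θ₂) := by
      rw [← sub_eq_zero]; exact hx
    exact Set.disjoint_left.mp hφ hmem (mem_lattice hN hx')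
  have hzero : ∀ x : ℝ, g x = 0 → φ x = 0 :=
    fun x hx => image_eq_zero_of_notMem_tsupport (hnotin x hx)
  have key : ∀ m : ℕ, ∃ Φ : 𝓢(ℝ, ℂ),
      (∀ x : ℝ, Φ x = (b ((((m:ℝ)+1))⁻¹ * x) : ℝ) • φ x) ∧ u Φ = 0 := by
    intro m
    have hr0 : (0:ℝ) < (m:ℝ)+1 := by positivity
    set χ : ℝ → ℝ := fun y => b ((((m:ℝ)+1))⁻¹ * y) with hχdef
    have hχsm : ContDiff ℝ ∞ χ := chi_smooth
    have hχsupp : HasCompactSupport χ := chi_supp hr0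
    set num : ℝ → ℂ := fun x => (χ x : ℝ) • φ x with hnumdef
    have hnum_sm : ContDiff ℝ ∞ num := hχsm.smul φ.smooth'
    have hnum_supp : HasCompactSupport num := by
      apply hχsupp.mono
      intro x hx
      simp only [Function.mem_support, hnumdef] at hx ⊢
      intro h0
      apply hx
      rw [h0]
      simp
    set ψf : ℝ → ℂ := fun x => num x / g x with hψdef
    have hψ_sm : ContDiff ℝ ∞ ψf := by
      rw [contDiff_iff_contDiffAt]
      intro x
      by_cases hx : g x = 0
      · have hx' : x ∉ tsupport (⇑φ) := hnotin x hx
        have hopen : IsOpen (tsupport (⇑φ))ᶜ := (isClosed_tsupport _).isOpen_compl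
        have hev : ψf =ᶠ[nhds x] fun _ => 0 := by
          filter_upwards [hopen.mem_nhds hx'] with y hy
          have hφy : φ y = 0 := image_eq_zero_of_notMem_tsupport hy
          simp [hψdef, hnumdef, hφy]
        exact (contDiffAt_const (c := (0:ℂ))).congr_of_eventuallyEq hev
      · have hinv : ContDiffAt ℝ ∞ (fun y : ℝ => (g y)⁻¹) x :=
          (contDiffAt_inv (𝕜 := ℝ) hx).comp x hg_sm.contDiffAt
        have hmul := hnum_sm.contDiffAt.mul hinv
        exact hmul.congr_of_eventuallyEq
          (Filter.Eventually.of_forall fun y => div_eq_mul_inv _ _)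
    have hψ_supp : HasCompactSupport ψf := by
      apply hnum_supp.mono
      intro x hx
      simp only [Function.mem_support, hψdef] at hx ⊢
      intro h0
      apply hx
      rw [h0, zero_div]
    set Ψ : 𝓢(ℝ, ℂ) := ofCS ψf hψ_sm hψ_supp with hΨdef
    set Φ : 𝓢(ℝ, ℂ) := ofCS num hnum_sm hnum_supp with hΦdef
    refine ⟨Φ, fun x => rfl, ?_⟩
    have hpoint : ∀ x : ℝ, (e₂ • Ψ + Φ) x = Complex.exp (2 * Real.pi * Complex.I * N * x) * Ψ x := by
      intro x
      have hΨx : Ψ x = ψf x := rfl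
      have hΦx : Φ x = num x := rfl
      simp only [SchwartzMap.add_apply, SchwartzMap.smul_apply, hΨx, hΦx, smul_eq_mul]
      by_cases hx : g x = 0
      · have hφx : φ x = 0 := hzero x hx
        have hnx : num x = 0 := by simp [hnumdef, hφx]
        have hexpx : Complex.exp (2 * Real.pi * Complex.I * N * x) = e₂ := by
          rw [← sub_eq_zero]; exact hx
        simp [hψdef, hnx, hexpx]
      · have hge : Complex.exp (2 * Real.pi * Complex.I * N * x) = g x + e₂ := by
          rw [hgdef]; ring
        rw [hge]
        have hψx : ψf x = num x / g x := rfl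
        rw [hψx]
        field_simp
        ring
    have hthis := hu Ψ (e₂ • Ψ + Φ) hpoint
    rw [map_add, _root_.map_smul, smul_eq_mul] at hthis
    linear_combination hthis
  choose Φ hΦeq hΦzero using key
  have hT := tendsto_cutoff φ Φ hΦeq
  have hcont : Filter.Tendsto (fun m => u (Φ m)) Filter.atTop (nhds (u φ)) :=
    (u.continuous.tendsto φ).comp hT
  have hconst : Filter.Tendsto (fun _ : ℕ => (0:ℂ)) Filter.atTop (nhds (u φ)) := by
    simpa [hΦzero] using hcont
  exact tendsto_nhds_unique hconst tendsto_const_nhds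
end
end

section
/- Let H be a Hermitian endomorphism of a nonzero finite-dimensional complex inner product space, ψ̃ a unit vector, Ẽ ∈ ℝ, ε = ‖H ψ̃ − Ẽ ψ̃‖, and α > 0. Suppose the interval Δ_α = [Ẽ − α, Ẽ + α] contains exactly one eigenvalue E* of H, that the eigenspace of E* is one-dimensional with unit eigenvector φ, and that every other eigenvalue of H lies outside Δ_α. Then ‖ψ̃ − ⟨φ, ψ̃⟩ φ‖ ≤ ε/α; consequently there exists β ∈ ℝ with ‖φ − e^{iβ} ψ̃‖ ≤ √2 · ε/α, and ⟨φ, ψ̃⟩ ≠ 0 as soon as ε < α. -/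
open Module

set_option maxHeartbeats 2000000 in
/-- Quasi-mode approximation: if the interval `Δ_α = [Ẽ−α, Ẽ+α]` contains exactly one
eigenvalue `E*` of the Hermitian endomorphism `H`, with one-dimensional eigenspace spanned
by the unit eigenvector `φ`, and `ψ̃` is a unit quasi-mode with error `ε = ‖Hψ̃ − Ẽψ̃‖`,
then `‖ψ̃ − ⟨φ,ψ̃⟩φ‖ ≤ ε/α`; hence there is `β ∈ ℝ` with `‖φ − e^{iβ}ψ̃‖ ≤ √2·ε/α`, and
`⟨φ,ψ̃⟩ ≠ 0` as soon as `ε < α`. -/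
theorem stmt_7 {V : Type*} [NormedAddCommGroup V] [InnerProductSpace ℂ V]
    [FiniteDimensional ℂ V] [Nontrivial V]
    (H : V →ₗ[ℂ] V) (hH : H.IsSymmetric)
    (ψ : V) (hψ : ‖ψ‖ = 1) (E : ℝ) (ε : ℝ) (hε : ε = ‖H ψ - (E : ℂ) • ψ‖)
    (α : ℝ) (hα : 0 < α)
    (Estar : ℝ) (hev : Module.End.HasEigenvalue (H : Module.End ℂ V) (Estar : ℂ))
    (hin : E - α ≤ Estar ∧ Estar ≤ E + α)
    (huniq : ∀ μ : ℝ, Module.End.HasEigenvalue (H : Module.End ℂ V) (μ : ℂ) →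
      E - α ≤ μ → μ ≤ E + α → μ = Estar)
    (hdim : Module.finrank ℂ (Module.End.eigenspace (H : Module.End ℂ V) (Estar : ℂ)) = 1)
    (φ : V) (hφ : φ ∈ Module.End.eigenspace (H : Module.End ℂ V) (Estar : ℂ))
    (hφ1 : ‖φ‖ = 1) :
    ‖ψ - (inner ℂ φ ψ : ℂ) • φ‖ ≤ ε / α ∧
    (∃ β : ℝ, ‖φ - Complex.exp (Complex.I * β) • ψ‖ ≤ Real.sqrt 2 * (ε / α)) ∧
    (ε < α → (inner ℂ φ ψ : ℂ) ≠ 0) := by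
  have hε0 : 0 ≤ ε := hε ▸ norm_nonneg _
  have hdiv0 : 0 ≤ ε / α := div_nonneg hε0 hα.le
  have hn : finrank ℂ V = finrank ℂ V := rfl
  set b := hH.eigenvectorBasis hn with hb
  set lam := hH.eigenvalues hn with hlam
  have happ : ∀ i, H (b i) = (lam i : ℂ) • b i := fun i => hH.apply_eigenvectorBasis hn i
  have hHφ : H φ = (Estar : ℂ) • φ := Module.End.mem_eigenspace_iff.mp hφ
  have hφ0 : φ ≠ 0 := fun h => by simp [h] at hφ1
  -- the eigenspace is the span of φ
  have hspan : Module.End.eigenspace (H : Module.End ℂ V) (Estar : ℂ) = Submodule.span ℂ {φ} := by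
    symm
    apply Submodule.eq_of_le_of_finrank_le
    · exact Submodule.span_le.mpr (Set.singleton_subset_iff.mpr hφ)
    · rw [hdim, finrank_span_singleton hφ0]
  -- basis vectors with eigenvalue ≠ Estar are orthogonal to φ
  have horth : ∀ i, lam i ≠ Estar → (inner ℂ (b i) φ : ℂ) = 0 := by
    intro i hne
    have h1 : (inner ℂ (H (b i)) φ : ℂ) = inner ℂ (b i) (H φ) := hH (b i) φ
    rw [happ, hHφ, inner_smul_left, inner_smul_right, Complex.conj_ofReal] at h1
    have h2 : ((lam i : ℂ) - Estar) * (inner ℂ (b i) φ : ℂ) = 0 := by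
      rw [sub_mul, h1, sub_self]
    rcases mul_eq_zero.mp h2 with h3 | h3
    · exact absurd (by exact_mod_cast sub_eq_zero.mp h3) hne
    · exact h3
  -- pick the basis vector spanning the eigenspace
  have hex : ∃ i, (inner ℂ (b i) φ : ℂ) ≠ 0 := by
    by_contra h
    push_neg at h
    apply hφ0
    have : b.repr φ = 0 := by
      ext i
      simpa [OrthonormalBasis.repr_apply_apply] using h i
    simpa using b.repr.map_eq_zero_iff.mp this
  obtain ⟨i0, hi0⟩ := hex
  have hlami0 : lam i0 = Estar := by
    by_contra h
    exact hi0 (horth i0 h)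
  have hbmem : b i0 ∈ Submodule.span ℂ {φ} := by
    rw [← hspan]
    exact Module.End.mem_eigenspace_iff.mpr (by rw [happ, hlami0])
  obtain ⟨u, hu⟩ := Submodule.mem_span_singleton.mp hbmem
  have hbnorm : ∀ i, ‖b i‖ = 1 := fun i => b.orthonormal.1 i
  have hu1 : ‖u‖ = 1 := by
    have := hbnorm i0
    rw [← hu, norm_smul, hφ1, mul_one] at this
    exact this
  have huc : (starRingEnd ℂ) u * u = 1 := by
    have h1 : u * (starRingEnd ℂ) u = (Complex.normSq u : ℂ) := Complex.mul_conj u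
    have h2 : Complex.normSq u = 1 := by
      rw [Complex.normSq_eq_norm_sq, hu1, one_pow]
    rw [mul_comm] at h1
    rw [h1, h2, Complex.ofReal_one]
  -- the i0-coefficient of ψ
  have hkey : (b.repr ψ i0 : ℂ) • b i0 = (inner ℂ φ ψ : ℂ) • φ := by
    rw [OrthonormalBasis.repr_apply_apply, ← hu, inner_smul_left, smul_smul]
    congr 1
    rw [show ((starRingEnd ℂ) u * (inner ℂ φ ψ : ℂ)) * u =
      ((starRingEnd ℂ) u * u) * (inner ℂ φ ψ : ℂ) from by ring, huc, one_mul]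
  set r := ψ - (inner ℂ φ ψ : ℂ) • φ with hr
  have hrrepr : r = ψ - (b.repr ψ i0 : ℂ) • b i0 := by rw [hr, hkey]
  -- other eigenvalues are not Estar
  have hlamne : ∀ i, i ≠ i0 → lam i ≠ Estar := by
    intro i hne hEq
    have hbi : b i ∈ Submodule.span ℂ {φ} := by
      rw [← hspan]
      exact Module.End.mem_eigenspace_iff.mpr (by rw [happ, hEq])
    obtain ⟨t, ht⟩ := Submodule.mem_span_singleton.mp hbi
    have horth2 : (inner ℂ (b i0) (b i) : ℂ) = 0 := b.orthonormal.2 (Ne.symm hne)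
    have hφφ : (inner ℂ φ φ : ℂ) = 1 := by
      rw [inner_self_eq_norm_sq_to_K, hφ1]; norm_num
    rw [← ht, ← hu, inner_smul_left, inner_smul_right, hφφ, mul_one] at horth2
    rcases mul_eq_zero.mp horth2 with h3 | h3
    · simp only [map_eq_zero] at h3
      rw [h3, norm_zero] at hu1; norm_num at hu1
    · rw [h3, zero_smul] at ht
      have := hbnorm i
      rw [← ht, norm_zero] at this; norm_num at this
  -- eigenvalue gap
  have hgap : ∀ i, i ≠ i0 → α ≤ |lam i - E| := by
    intro i hne
    by_contra h
    push_neg at h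
    rw [abs_sub_lt_iff] at h
    have := huniq (lam i) (hH.hasEigenvalue_eigenvalues hn i)
      (by linarith [h.2]) (by linarith [h.1])
    exact hlamne i hne this
  -- Parseval
  have normsq : ∀ v : V, ‖v‖ ^ 2 = ∑ i, ‖b.repr v i‖ ^ 2 := by
    intro v
    rw [← b.repr.norm_map v, EuclideanSpace.norm_eq]
    exact Real.sq_sqrt (Finset.sum_nonneg fun i _ => sq_nonneg _)
  -- coefficients of the residual and of the defect
  have hεcoef : ∀ i, b.repr (H ψ - (E : ℂ) • ψ) i = ((lam i : ℂ) - E) * b.repr ψ i := by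
    intro i
    rw [map_sub, map_smul]
    simp only [PiLp.sub_apply, PiLp.smul_apply, smul_eq_mul]
    rw [← hb, ← hlam] at *
    rw [show (b.repr (H ψ)) i = (lam i : ℂ) * b.repr ψ i from
      hH.eigenvectorBasis_apply_self_apply hn ψ i]
    ring
  have hrcoef0 : b.repr r i0 = 0 := by
    rw [hrrepr, map_sub, map_smul]
    simp [OrthonormalBasis.repr_self, EuclideanSpace.single_apply]
  have hrcoef : ∀ i, i ≠ i0 → b.repr r i = b.repr ψ i := by
    intro i hne
    rw [hrrepr, map_sub, map_smul]
    simp [OrthonormalBasis.repr_self, EuclideanSpace.single_apply, hne]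
  -- main estimate, squared
  have hmain : ‖r‖ ^ 2 * α ^ 2 ≤ ε ^ 2 := by
    rw [hε, normsq (H ψ - (E : ℂ) • ψ), normsq r, Finset.sum_mul]
    apply Finset.sum_le_sum
    intro i _
    by_cases hi : i = i0
    · subst hi
      rw [hrcoef0]
      simp only [norm_zero]
      rw [show (0:ℝ) ^ 2 * α ^ 2 = 0 from by ring]
      positivity
    · rw [hrcoef i hi, hεcoef i, norm_mul, mul_pow]
      have h1 : α ≤ ‖((lam i : ℂ) - E)‖ := by
        have : ((lam i : ℂ) - E) = ((lam i - E : ℝ) : ℂ) := by push_cast; ring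
        rw [this, Complex.norm_real, Real.norm_eq_abs]
        exact hgap i hi
      have h2 : α ^ 2 ≤ ‖((lam i : ℂ) - E)‖ ^ 2 :=
        pow_le_pow_left₀ hα.le h1 2
      nlinarith [sq_nonneg (‖b.repr ψ i‖), norm_nonneg (b.repr ψ i)]
  have hmain' : ‖r‖ ≤ ε / α := by
    have h1 : ‖r‖ ^ 2 ≤ (ε / α) ^ 2 := by
      rw [div_pow, le_div_iff₀ (by positivity)]
      exact hmain
    calc ‖r‖ = Real.sqrt (‖r‖ ^ 2) := (Real.sqrt_sq (norm_nonneg r)).symm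
      _ ≤ Real.sqrt ((ε / α) ^ 2) := Real.sqrt_le_sqrt h1
      _ = ε / α := Real.sqrt_sq hdiv0
  refine ⟨hmain', ?_, ?_⟩
  · -- phase alignment
    set z := (inner ℂ φ ψ : ℂ) with hz
    -- Pythagoras: 1 = ‖z‖² + ‖r‖²
    have hperp : (inner ℂ ((z : ℂ) • φ) r : ℂ) = 0 := by
      rw [hr, inner_smul_left, inner_sub_right, inner_smul_right,
        inner_self_eq_norm_sq_to_K, hφ1]
      simp [← hz]
    have hpyth : 1 = ‖z‖ ^ 2 + ‖r‖ ^ 2 := by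
      have h := norm_add_sq_eq_norm_sq_add_norm_sq_of_inner_eq_zero ((z : ℂ) • φ) r hperp
      have hsum : (z : ℂ) • φ + r = ψ := by rw [hr]; abel
      rw [hsum, hψ, norm_smul, hφ1, mul_one] at h
      linear_combination h
    have hz1 : ‖z‖ ≤ 1 := by nlinarith [norm_nonneg z, sq_nonneg (‖r‖)]
    refine ⟨-Complex.arg z, ?_⟩
    have hw : Complex.exp (Complex.I * ((-Complex.arg z : ℝ) : ℂ)) * z = (‖z‖ : ℂ) := by
      calc Complex.exp (Complex.I * ((-Complex.arg z : ℝ) : ℂ)) * z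
          = Complex.exp (Complex.I * ((-Complex.arg z : ℝ) : ℂ)) *
            ((‖z‖ : ℂ) * Complex.exp (Complex.arg z * Complex.I)) := by
            rw [Complex.norm_mul_exp_arg_mul_I z]
        _ = (‖z‖ : ℂ) * Complex.exp (Complex.I * ((-Complex.arg z : ℝ) : ℂ) +
              Complex.arg z * Complex.I) := by rw [Complex.exp_add]; ring
        _ = (‖z‖ : ℂ) := by
            rw [show Complex.I * ((-Complex.arg z : ℝ) : ℂ) + Complex.arg z * Complex.I = 0 from by
              push_cast; ring, Complex.exp_zero, mul_one]
    set w := Complex.exp (Complex.I * ((-Complex.arg z : ℝ) : ℂ)) with hwdef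
    have hwn : ‖w‖ = 1 := by
      rw [hwdef, Complex.norm_exp]
      simp [Complex.mul_re]
    have hsq : ‖φ - w • ψ‖ ^ 2 = 2 - 2 * ‖z‖ := by
      rw [norm_sub_sq (𝕜 := ℂ), inner_smul_right, ← hz, hw, norm_smul, hwn, hψ, hφ1]
      simp [Complex.ofReal_re]
      ring
    have hz2 : ‖z‖ ^ 2 ≤ ‖z‖ := by nlinarith [norm_nonneg z]
    have hr2 : ‖r‖ ^ 2 ≤ (ε / α) ^ 2 := by nlinarith [norm_nonneg r]
    have h2 : ‖φ - w • ψ‖ ^ 2 ≤ 2 * (ε / α) ^ 2 := by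
      rw [hsq]; linarith
    calc ‖φ - w • ψ‖ = Real.sqrt (‖φ - w • ψ‖ ^ 2) := (Real.sqrt_sq (norm_nonneg _)).symm
      _ ≤ Real.sqrt (2 * (ε / α) ^ 2) := Real.sqrt_le_sqrt h2
      _ = Real.sqrt 2 * (ε / α) := by
          rw [Real.sqrt_mul (by norm_num), Real.sqrt_sq hdiv0]
  · intro hlt h0
    have : r = ψ := by rw [hr, h0, zero_smul, sub_zero]
    rw [this, hψ] at hmain'
    have : ε / α < 1 := (div_lt_one hα).mpr hlt
    linarith
end

section
/- Let f : ℝ → ℝ be continuously differentiable and satisfy f(θ + 2π) = f(θ) + 2πN for all θ, for some integer N. Let g(θ) = exp(i f(θ)) and let c_n = (1/2π) ∫₀^{2π} g(θ) exp(−i n θ) dθ be its Fourier coefficients. Then the series Σ_{n∈ℤ} n |c_n|² converges and equals N. -/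
open Real Complex

/-- If `f : ℝ → ℝ` is `C¹` with `f(θ+2π) = f(θ) + 2πN` and `c_n` are the Fourier
coefficients of `g = exp(if)`, then `Σ_{n∈ℤ} n |c_n|²` converges to `N`. -/
theorem stmt_9 (f : ℝ → ℝ) (hf : ContDiff ℝ 1 f) (N : ℤ)
    (hper : ∀ θ : ℝ, f (θ + 2 * π) = f θ + 2 * π * N)
    (c : ℤ → ℂ)
    (hc : ∀ n : ℤ, c n = (1 / (2 * π)) *
      ∫ θ in (0 : ℝ)..(2 * π),
        Complex.exp (Complex.I * f θ) * Complex.exp (-Complex.I * n * θ)) :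
    HasSum (fun n : ℤ => (n : ℝ) * ‖c n‖ ^ 2) (N : ℝ) := by
  have hπ : (0 : ℝ) < 2 * π := by positivity
  haveI : Fact (0 < 2 * π) := ⟨hπ⟩
  set f' : ℝ → ℝ := deriv f with hf'def
  have hfd : ∀ x, HasDerivAt f (f' x) x := fun x => (hf.differentiable one_ne_zero x).hasDerivAt
  have hf'c : Continuous f' := hf.continuous_deriv le_rfl
  set g : ℝ → ℂ := fun θ => Complex.exp (Complex.I * f θ) with hgdef
  set g' : ℝ → ℂ := fun θ => Complex.I * f' θ * g θ with hg'def
  have hgd : ∀ x, HasDerivAt g (g' x) x := by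
    intro x
    have h1 : HasDerivAt (fun θ : ℝ => (Complex.I * f θ : ℂ)) (Complex.I * f' x) x := by
      simpa [mul_comm] using ((hfd x).ofReal_comp (z := x)).const_mul Complex.I
    have h2 := h1.cexp
    rw [hgdef, hg'def]
    convert h2 using 1
    ring
  have hfc : Continuous f := hf.continuous
  have hgc : Continuous g := by rw [hgdef]; fun_prop
  have hgper : ∀ θ, g (θ + 2 * π) = g θ := by
    intro θ
    have harg : Complex.I * ((f θ + 2 * π * N : ℝ) : ℂ)
        = Complex.I * f θ + N * (2 * π * Complex.I) := by
      push_cast; ring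
    rw [hgdef]
    simp only [hper θ, harg, Complex.exp_add, Complex.exp_int_mul_two_pi_mul_I, mul_one]
  have hf'per : ∀ θ, f' (θ + 2 * π) = f' θ := by
    intro θ
    have h1 : HasDerivAt (fun x => f (x + 2 * π)) (f' (θ + 2 * π) * 1) θ :=
      (hfd (θ + 2 * π)).comp θ ((hasDerivAt_id θ).add_const (2 * π))
    have h2 : HasDerivAt (fun x => f x + 2 * π * N) (f' θ) θ := (hfd θ).add_const _
    have he : (fun x => f (x + 2 * π)) = fun x => f x + 2 * π * N := funext hper
    rw [he] at h1
    simpa using h1.unique h2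
  have hg'per : ∀ θ, g' (θ + 2 * π) = g' θ := by
    intro θ; rw [hg'def]; simp only [hf'per θ, hgper θ]
  have hg'c : Continuous g' :=
    (continuous_const.mul (Complex.continuous_ofReal.comp hf'c)).mul hgc
  have hg02 : g 0 = g (2 * π) := by simpa using (hgper 0).symm
  have hg'02 : g' 0 = g' (2 * π) := by simpa using (hg'per 0).symm
  have hgg : g (0 + 2 * π) - g 0 = 0 := by rw [hgper 0, sub_self]
  -- lifts to the circle
  set G : C(AddCircle (2 * π), ℂ) :=
    ⟨AddCircle.liftIco (2 * π) 0 g, AddCircle.liftIco_zero_continuous hg02 hgc.continuousOn⟩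
    with hGdef
  set G' : C(AddCircle (2 * π), ℂ) :=
    ⟨AddCircle.liftIco (2 * π) 0 g', AddCircle.liftIco_zero_continuous hg'02 hg'c.continuousOn⟩
    with hG'def
  have hab : (0 : ℝ) < 0 + 2 * π := by linarith
  have hfourier : ∀ (n : ℤ) (x : ℝ),
      (fourier (-n) (x : AddCircle ((0:ℝ) + 2 * π - 0)) : ℂ)
        = Complex.exp (-Complex.I * n * x) := by
    intro n x
    rw [fourier_coe_apply]
    congr 1
    have hne : ((((0:ℝ) + 2 * π - 0 : ℝ)) : ℂ) ≠ 0 := by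
      push_cast; simp [Real.pi_ne_zero]
    rw [div_eq_iff hne]
    push_cast
    ring
  have hcOn : ∀ n, fourierCoeffOn hab g n = c n := by
    intro n
    have hc' : c n = (1 / (2 * π) : ℂ) *
        ∫ θ in (0 : ℝ)..(0 + 2 * π), g θ * Complex.exp (-Complex.I * n * θ) := by
      rw [hc n, zero_add]
    rw [fourierCoeffOn_eq_integral, hc', Complex.real_smul]
    congr 1
    · push_cast; norm_num
    · refine intervalIntegral.integral_congr fun x _ => ?_
      rw [smul_eq_mul, hfourier n x, mul_comm]
  have hcoeG : ∀ n, fourierCoeff (⇑G) n = c n := by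
    intro n
    rw [show ⇑G = AddCircle.liftIco (2 * π) 0 g from rfl, fourierCoeff_liftIco_eq g n, hcOn n]
  have hcoeG' : ∀ n, fourierCoeff (⇑G') n = fourierCoeffOn hab g' n := fun n =>
    fourierCoeff_liftIco_eq g' n
  have hFTCg : (∫ x in (0:ℝ)..(0 + 2 * π), g' x) = 0 := by
    rw [intervalIntegral.integral_eq_sub_of_hasDerivAt (fun x _ => hgd x)
      (hg'c.intervalIntegrable _ _), hgper 0, sub_self]
  -- relation between coefficients
  have hrel : ∀ n : ℤ, fourierCoeff (⇑G') n = Complex.I * n * c n := by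
    intro n
    rcases eq_or_ne n 0 with rfl | hn
    · rw [hcoeG' 0, fourierCoeffOn_eq_integral]
      simp only [Int.cast_zero, mul_zero, zero_mul]
      have hone : ∀ x : ℝ,
          (fourier (-(0:ℤ)) (x : AddCircle ((0:ℝ) + 2 * π - 0)) : ℂ) • g' x = g' x := by
        intro x; rw [neg_zero, fourier_zero, one_smul]
      rw [intervalIntegral.integral_congr fun x _ => hone x, hFTCg, smul_zero]
    · have key := fourierCoeffOn_of_hasDerivAt hab hn
        (f := g) (f' := g') (fun x _ => hgd x) (hg'c.intervalIntegrable _ _)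
      rw [hgg, mul_zero, zero_sub, hcOn n] at key
      rw [hcoeG' n]
      rw [key]
      have hn' : (n : ℂ) ≠ 0 := Int.cast_ne_zero.mpr hn
      have hπ' : (π : ℂ) ≠ 0 := Complex.ofReal_ne_zero.mpr Real.pi_ne_zero
      push_cast
      field_simp
      ring
  -- Parseval
  set gL := ContinuousMap.toLp (E := ℂ) 2 AddCircle.haarAddCircle ℂ G with hgL
  set G'L := ContinuousMap.toLp (E := ℂ) 2 AddCircle.haarAddCircle ℂ G' with hG'L
  have hP := fourierBasis.hasSum_inner_mul_inner gL G'L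
  have hterm : ∀ i : ℤ,
      (inner ℂ gL (fourierBasis i) : ℂ) * (inner ℂ (fourierBasis i) G'L : ℂ)
        = Complex.I * ((i : ℂ) * ((‖c i‖ ^ 2 : ℝ) : ℂ)) := by
    intro i
    have h1 : (inner ℂ (fourierBasis i) G'L : ℂ) = fourierCoeff (⇑G') i := by
      rw [← fourierBasis.repr_apply_apply, fourierBasis_repr, hG'L, fourierCoeff_toLp]
    have h2 : (inner ℂ gL (fourierBasis i) : ℂ) = starRingEnd ℂ (c i) := by
      rw [← inner_conj_symm, ← fourierBasis.repr_apply_apply, fourierBasis_repr, hgL,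
        fourierCoeff_toLp, hcoeG i]
    rw [h1, h2, hrel i]
    have hcc : (starRingEnd ℂ) (c i) * c i = ((‖c i‖ ^ 2 : ℝ) : ℂ) := by
      rw [mul_comm, Complex.mul_conj, Complex.normSq_eq_norm_sq]
    calc (starRingEnd ℂ) (c i) * (Complex.I * i * c i)
        = (Complex.I * i) * ((starRingEnd ℂ) (c i) * c i) := by ring
      _ = Complex.I * ((i : ℂ) * ((‖c i‖ ^ 2 : ℝ) : ℂ)) := by rw [hcc]; ring
  -- compute the inner product
  have hinner : (inner ℂ gL G'L : ℂ) = Complex.I * N := by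
    rw [hgL, hG'L, MeasureTheory.ContinuousMap.inner_toLp _ _ _]
    have hint := fourierCoeff_eq_intervalIntegral (T := 2 * π)
      (fun z => (starRingEnd ℂ) (G z) * G' z) 0 0
    rw [fourierCoeff] at hint
    simp only [neg_zero, fourier_zero, one_smul] at hint
    rw [show (∫ x : AddCircle (2 * π), G' x * (starRingEnd ℂ) (G x) ∂AddCircle.haarAddCircle)
        = ∫ x : AddCircle (2 * π), (starRingEnd ℂ) (G x) * G' x ∂AddCircle.haarAddCircle from
          MeasureTheory.integral_congr_ae (Filter.Eventually.of_forall fun x => mul_comm _ _)]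
    rw [show (∫ x : AddCircle (2 * π), (starRingEnd ℂ) (G x) * G' x ∂AddCircle.haarAddCircle)
        = ∫ z : AddCircle (2 * π),
            (fun z => (starRingEnd ℂ) (G z) * G' z) z ∂AddCircle.haarAddCircle from rfl, hint]
    have hcongr : (∫ x in (0:ℝ)..(0 + 2 * π),
          (fun z : AddCircle (2 * π) => (starRingEnd ℂ) (G z) * G' z) x)
        = ∫ x in (0:ℝ)..(0 + 2 * π), (Complex.I * f' x : ℂ) := by
      rw [intervalIntegral.integral_of_le (by linarith : (0:ℝ) ≤ 0 + 2 * π),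
        intervalIntegral.integral_of_le (by linarith : (0:ℝ) ≤ 0 + 2 * π),
        MeasureTheory.integral_Ioc_eq_integral_Ioo, MeasureTheory.integral_Ioc_eq_integral_Ioo]
      refine MeasureTheory.setIntegral_congr_fun measurableSet_Ioo fun x hx => ?_
      have hxI : x ∈ Set.Ico (0:ℝ) (0 + 2 * π) := Set.Ioo_subset_Ico_self hx
      have hG1 : G (x : AddCircle (2 * π)) = g x :=
        (show AddCircle.liftIco (2 * π) 0 g (x : AddCircle (2 * π)) = g x from
          AddCircle.liftIco_coe_apply hxI)
      have hG2 : G' (x : AddCircle (2 * π)) = g' x :=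
        (show AddCircle.liftIco (2 * π) 0 g' (x : AddCircle (2 * π)) = g' x from
          AddCircle.liftIco_coe_apply hxI)
      show (starRingEnd ℂ) (G (x : AddCircle (2 * π))) * G' (x : AddCircle (2 * π))
        = Complex.I * f' x
      rw [hG1, hG2, hg'def, hgdef]
      have hconj : (starRingEnd ℂ) (Complex.exp (Complex.I * f x))
          = Complex.exp (-(Complex.I * f x)) := by
        rw [← Complex.exp_conj]; congr 1; simp
      simp only [hconj]
      rw [show Complex.exp (-(Complex.I * (f x : ℂ))) * (Complex.I * (f' x : ℂ) *
          Complex.exp (Complex.I * (f x : ℂ)))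
        = Complex.exp (-(Complex.I * (f x : ℂ))) * Complex.exp (Complex.I * (f x : ℂ)) *
          (Complex.I * (f' x : ℂ)) by ring, ← Complex.exp_add, neg_add_cancel,
        Complex.exp_zero, one_mul]
    rw [hcongr]
    have hfint : (∫ x in (0:ℝ)..(0 + 2 * π), (Complex.I * f' x : ℂ))
        = Complex.I * (2 * π * N) := by
      rw [intervalIntegral.integral_const_mul,
        show (∫ x in (0:ℝ)..(0 + 2 * π), (f' x : ℂ))
          = ((∫ x in (0:ℝ)..(0 + 2 * π), f' x : ℝ) : ℂ) from
            intervalIntegral.integral_ofReal,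
        intervalIntegral.integral_eq_sub_of_hasDerivAt (fun x _ => hfd x)
          (hf'c.intervalIntegrable _ _), hper 0]
      push_cast; ring
    rw [hfint, Complex.real_smul]
    have hπ' : (π : ℂ) ≠ 0 := Complex.ofReal_ne_zero.mpr Real.pi_ne_zero
    push_cast
    field_simp
  rw [hinner] at hP
  have hP2 : HasSum (fun i : ℤ => Complex.I * ((i : ℂ) * ((‖c i‖ ^ 2 : ℝ) : ℂ)))
      (Complex.I * N) := by
    simpa only [hterm] using hP
  have hP3 : HasSum (fun i : ℤ => (i : ℂ) * ((‖c i‖ ^ 2 : ℝ) : ℂ)) ((N : ℤ) : ℂ) :=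
    (hasSum_mul_left_iff Complex.I_ne_zero).mp hP2
  have heq : (fun i : ℤ => (((i : ℝ) * ‖c i‖ ^ 2 : ℝ) : ℂ))
      = fun i : ℤ => (i : ℂ) * ((‖c i‖ ^ 2 : ℝ) : ℂ) := by
    funext i; push_cast; ring
  have hP4 : HasSum (fun i : ℤ => (((i : ℝ) * ‖c i‖ ^ 2 : ℝ) : ℂ)) (((N : ℝ)) : ℂ) := by
    rw [heq, show (((N : ℝ)) : ℂ) = ((N : ℤ) : ℂ) by push_cast; ring]; exact hP3
  exact Complex.hasSum_ofReal.mp hP4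
end
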